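/- arXiv:2202.09748 — 4 statements merged into one kernel-verified Lean document; each statement's English description precedes it below -/
import Mathlib

section
/- Let X be a random vector in ℝⁿ whose law is the multivariate Gaussian measure with mean x̂ ∈ ℝⁿ and positive-definite covariance Σ. Let B be a finite index set, and for each j ∈ B and m ∈ {1, 2} let N_{j,m} ∈ ℝⁿ be a nonzero vector, c_{j,m} ∈ ℝ, and δ_{j,m} ∈ (0, 1/2) with ∑_{j∈B} ∑_{m∈{1,2}} δ_{j,m} ≤ δ. If for every j ∈ B there exists m ∈ {1, 2} such that erf((N_{j,m}ᵀ x̂ − c_{j,m}) / √(2 N_{j,m}ᵀ Σ N_{j,m})) ≥ 1 − 2 δ_{j,m}, then Pr(⋂_{j∈B} ⋃_{m∈{1,2}} { N_{j,m}ᵀ X ≥ c_{j,m} }) ≥ 1 − δ. -/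
open MeasureTheory ProbabilityTheory Real
open scoped RealInnerProductSpace

/-- The Gauss error function `erf z = (2/√π) ∫ t in 0..z, exp (-t²)`. -/
noncomputable def erf (z : ℝ) : ℝ :=
  (2 / Real.sqrt Real.pi) * ∫ t in (0:ℝ)..z, Real.exp (-t ^ 2)

/-- The multivariate Gaussian measure on `EuclideanSpace ℝ (Fin n)` with mean `μ` and
(positive-definite) covariance matrix `S`, given by its density
`(√((2π)ⁿ det S))⁻¹ exp (-⟪x - μ, S⁻¹ (x - μ)⟫ / 2)` with respect to Lebesgue measure. -/
noncomputable def mvGaussian {n : ℕ} (μ : EuclideanSpace ℝ (Fin n))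
    (S : Matrix (Fin n) (Fin n) ℝ) : Measure (EuclideanSpace ℝ (Fin n)) :=
  volume.withDensity fun x =>
    ENNReal.ofReal ((Real.sqrt ((2 * Real.pi) ^ n * S.det))⁻¹ *
      Real.exp (-⟪x - μ, Matrix.toEuclideanLin S⁻¹ (x - μ)⟫ / 2))

/-!
Mathlib's `multivariateGaussian μ S` is the push-forward of the standard Gaussian measure under
`u ↦ μ + √S u`. The standard Gaussian has density `(2π)^(-n/2) exp (-‖u‖²/2)` (compare
characteristic functions), so the affine change of variables shows that it coincides with
`mvGaussian μ S`. Hence `⟪N, X⟫` is a real Gaussian with mean `⟪N, x̂⟫` and variance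
`⟪N, Σ N⟫ > 0`, whose distribution function is expressed through `erf`; the deterministic
constraint for `m` is then equivalent to `Pr(⟪N_{j,m}, X⟫ < c_{j,m}) ≤ δ_{j,m}`, and a union
bound over `j ∈ B` finishes the proof.
-/

open Set
open scoped NNReal MatrixOrder

lemma erf_neg (z : ℝ) : erf (-z) = -erf z := by
  have h : ∫ t in (0:ℝ)..-z, exp (-t ^ 2) = -∫ t in (0:ℝ)..z, exp (-t ^ 2) := by
    rw [intervalIntegral.integral_symm, ← neg_zero,
      ← intervalIntegral.integral_comp_neg (fun t => exp (-t ^ 2)), neg_zero]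
    simp only [neg_sq]
  rw [erf, erf, h]
  ring

section GaussianReal

variable (m : ℝ) {v : ℝ≥0}

lemma intervalIntegral_gaussianPDFReal_eq_erf (hv : v ≠ 0) (c : ℝ) :
    ∫ x in m..c, gaussianPDFReal m v x = erf ((c - m) / √(2 * v)) / 2 := by
  have hs : 0 < √(2 * v) := by positivity
  have hpdf (x : ℝ) : gaussianPDFReal m v x
      = (√(2 * π * v))⁻¹ * exp (-(x / √(2 * v) - m / √(2 * v)) ^ 2) := by
    rw [gaussianPDFReal, ← sub_div, div_pow, sq_sqrt (by positivity), neg_div]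
  simp_rw [hpdf, intervalIntegral.integral_const_mul,
    intervalIntegral.integral_comp_div_sub (fun t => exp (-t ^ 2)) hs.ne', sub_self, erf,
    smul_eq_mul, ← sub_div]
  rw [show 2 * π * v = π * (2 * v) by ring, sqrt_mul pi_pos.le]
  field_simp

lemma gaussianReal_Iic_mean (hv : v ≠ 0) : gaussianReal m v (Iic m) = 2⁻¹ := by
  have := nullSingletonClass_gaussianReal (μ := m) hv
  have hsymm : gaussianReal m v (Iic m) = gaussianReal m v (Ioi m) := by
    calc gaussianReal m v (Iic m) = (gaussianReal m v).map (2 * m - ·) (Iic m) := by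
          rw [gaussianReal_map_const_sub]; ring_nf
      _ = gaussianReal m v (Ici m) := by
          rw [Measure.map_apply (by fun_prop) measurableSet_Iic]
          congr 1
          ext x
          simp only [mem_preimage, mem_Iic, mem_Ici]
          constructor <;> intro <;> linarith
      _ = gaussianReal m v (Ioi m) := measure_congr Ioi_ae_eq_Ici.symm
  have htotal : gaussianReal m v (Iic m) + gaussianReal m v (Ioi m) = 1 := by
    rw [← measure_union (Iic_disjoint_Ioi le_rfl) measurableSet_Ioi, Iic_union_Ioi, measure_univ]
  rw [← hsymm, ← two_mul] at htotal
  exact ENNReal.eq_inv_of_mul_eq_one_left (by rwa [mul_comm])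

lemma gaussianReal_Iio_eq_erf (hv : v ≠ 0) (c : ℝ) :
    gaussianReal m v (Iio c) = ENNReal.ofReal ((1 + erf ((c - m) / √(2 * v))) / 2) := by
  have := nullSingletonClass_gaussianReal (μ := m) hv
  have hhalf : ∫ x in Iic m, gaussianPDFReal m v x = 1 / 2 := by
    have h := gaussianReal_Iic_mean m hv
    rw [gaussianReal_apply_eq_integral m hv, ← one_div, ← ENNReal.ofReal_one,
      ← ENNReal.ofReal_ofNat 2, ← ENNReal.ofReal_div_of_pos two_pos] at h
    rwa [← ENNReal.ofReal_eq_ofReal_iff (setIntegral_nonneg measurableSet_Iic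
      fun x _ => gaussianPDFReal_nonneg m v x) (by norm_num)]
  have hsplit := intervalIntegral.integral_Iic_sub_Iic (a := m) (b := c)
    (integrable_gaussianPDFReal m v).integrableOn (integrable_gaussianPDFReal m v).integrableOn
  rw [hhalf, intervalIntegral_gaussianPDFReal_eq_erf m hv] at hsplit
  rw [measure_congr Iio_ae_eq_Iic, gaussianReal_apply_eq_integral m hv]
  congr 1
  linarith

end GaussianReal

section StdGaussian

variable {E : Type*} [NormedAddCommGroup E] [InnerProductSpace ℝ E]

noncomputable def stdGaussianPDFReal (x : E) : ℝ :=
  (2 * π) ^ (-(Module.finrank ℝ E / 2 : ℝ)) * exp (-‖x‖ ^ 2 / 2)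

variable [FiniteDimensional ℝ E] [MeasurableSpace E] [BorelSpace E]

lemma integral_stdGaussianPDFReal : ∫ x : E, stdGaussianPDFReal x = 1 := by
  simp_rw [stdGaussianPDFReal, integral_const_mul, neg_div, div_eq_inv_mul (‖_‖ ^ 2), ← neg_mul]
  rw [GaussianFourier.integral_rexp_neg_mul_sq_norm (by norm_num), div_inv_eq_mul, mul_comm π,
    ← rpow_add (by positivity), neg_add_cancel, rpow_zero]

instance isProbabilityMeasure_withDensity_stdGaussianPDFReal :
    IsProbabilityMeasure (volume.withDensity fun x : E => ENNReal.ofReal (stdGaussianPDFReal x)) := by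
  constructor
  rw [withDensity_apply _ MeasurableSet.univ, Measure.restrict_univ,
    ← ofReal_integral_eq_lintegral_ofReal, integral_stdGaussianPDFReal, ENNReal.ofReal_one]
  · exact Integrable.of_integral_ne_zero (by rw [integral_stdGaussianPDFReal]; exact one_ne_zero)
  · exact ae_of_all _ fun x => by unfold stdGaussianPDFReal; positivity

lemma charFun_withDensity_stdGaussianPDFReal (t : E) :
    charFun (volume.withDensity fun x : E => ENNReal.ofReal (stdGaussianPDFReal x)) t
      = Complex.exp (-‖t‖ ^ 2 / 2) := by
  rw [charFun_apply, integral_withDensity_eq_integral_toReal_smul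
    (by unfold stdGaussianPDFReal; fun_prop) (ae_of_all _ fun _ => ENNReal.ofReal_lt_top)]
  have h (x : E) : (ENNReal.ofReal (stdGaussianPDFReal x)).toReal • Complex.exp (⟪x, t⟫ * Complex.I)
      = ((2 * π) ^ (-(Module.finrank ℝ E / 2 : ℝ)) : ℝ) *
        Complex.exp (-(1 / 2 : ℂ) * ‖x‖ ^ 2 + Complex.I * ⟪t, x⟫) := by
    rw [ENNReal.toReal_ofReal (by unfold stdGaussianPDFReal; positivity), stdGaussianPDFReal,
      Complex.real_smul, Complex.ofReal_mul, mul_assoc, Complex.ofReal_exp, ← Complex.exp_add,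
      real_inner_comm]
    push_cast
    ring_nf
  have hconst : (((2 * π) ^ (-(Module.finrank ℝ E / 2 : ℝ)) : ℝ) : ℂ)
      * ((π : ℂ) / (1 / 2)) ^ ((Module.finrank ℝ E : ℂ) / 2) = 1 := by
    rw [show (π : ℂ) / (1 / 2) = ((2 * π : ℝ) : ℂ) by push_cast; ring,
      show (Module.finrank ℝ E : ℂ) / 2 = ((Module.finrank ℝ E / 2 : ℝ) : ℂ) by push_cast; ring,
      ← Complex.ofReal_cpow (by positivity), ← Complex.ofReal_mul, ← rpow_add (by positivity),
      neg_add_cancel, rpow_zero, Complex.ofReal_one]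
  simp_rw [h, integral_const_mul]
  rw [GaussianFourier.integral_cexp_neg_mul_sq_norm_add (by norm_num), ← mul_assoc, hconst,
    one_mul, Complex.I_sq]
  congr 1
  ring

lemma stdGaussian_eq_withDensity :
    stdGaussian E = volume.withDensity fun x => ENNReal.ofReal (stdGaussianPDFReal x) :=
  Measure.ext_of_charFun (funext fun t => by
    rw [charFun_stdGaussian, charFun_withDensity_stdGaussianPDFReal])

end StdGaussian

section AffineChangeOfVariables

lemma MeasurableEquiv.map_withDensity {α β : Type*} [MeasurableSpace α] [MeasurableSpace β]
    (e : α ≃ᵐ β) (μ : Measure α) (f : α → ENNReal) :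
    (μ.withDensity f).map e = (μ.map e).withDensity (f ∘ e.symm) := by
  ext s hs
  rw [e.map_apply, withDensity_apply _ (e.measurable hs), withDensity_apply _ hs, e.restrict_map,
    lintegral_map_equiv]
  simp

variable {E : Type*} [NormedAddCommGroup E] [NormedSpace ℝ E] [FiniteDimensional ℝ E]
  [MeasurableSpace E] [BorelSpace E] (μ : Measure E) [μ.IsAddHaarMeasure] (a : E) (A : E ≃ₗ[ℝ] E)

lemma map_add_linearEquiv_addHaar :
    μ.map (fun x => a + A x) = ENNReal.ofReal |LinearMap.det (A : E →ₗ[ℝ] E)|⁻¹ • μ := by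
  have hA : Continuous A := A.toLinearMap.continuous_of_finiteDimensional
  have hmap := Measure.map_linearMap_addHaar_eq_smul_addHaar μ A.isUnit_det'.ne_zero
  rw [LinearEquiv.coe_coe] at hmap
  rw [show (fun x => a + A x) = (a + ·) ∘ A from rfl,
    ← Measure.map_map (measurable_const_add a) hA.measurable, hmap, Measure.map_smul,
    map_add_left_eq_self, abs_inv]

lemma map_add_linearEquiv_withDensity {f : E → ENNReal} (hf : Measurable f) :
    (μ.withDensity f).map (fun x => a + A x) = μ.withDensity
      fun y => ENNReal.ofReal |LinearMap.det (A : E →ₗ[ℝ] E)|⁻¹ * f (A.symm (y - a)) := by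
  let T : E ≃ᵐ E :=
    (A.toContinuousLinearEquiv.toHomeomorph.trans (Homeomorph.addLeft a)).toMeasurableEquiv
  have hT : ⇑T.symm = fun y => A.symm (y - a) := by
    funext y
    change A.symm ((Homeomorph.addLeft a).symm y) = A.symm (y - a)
    rw [Homeomorph.addLeft_symm, sub_eq_neg_add]
    rfl
  change (μ.withDensity f).map T = _
  rw [T.map_withDensity]
  change (μ.map fun x => a + A x).withDensity _ = _
  rw [map_add_linearEquiv_addHaar, withDensity_smul_measure,
    ← withDensity_smul _ (hf.comp T.symm.measurable), hT]
  rfl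

end AffineChangeOfVariables

lemma norm_sq_toEuclideanLin_inv {ι : Type*} [Fintype ι] [DecidableEq ι] {L : Matrix ι ι ℝ}
    (hL : L.IsSymm) (z : EuclideanSpace ℝ ι) :
    ‖Matrix.toEuclideanLin L⁻¹ z‖ ^ 2 = ⟪z, Matrix.toEuclideanLin (L * L)⁻¹ z⟫ := by
  rw [← real_inner_self_eq_norm_sq]
  change ⟪Matrix.toEuclideanCLM (𝕜 := ℝ) L⁻¹ z, Matrix.toEuclideanCLM (𝕜 := ℝ) L⁻¹ z⟫
    = ⟪z, Matrix.toEuclideanCLM (𝕜 := ℝ) (L * L)⁻¹ z⟫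
  rw [Matrix.inner_toEuclideanCLM, Matrix.inner_toEuclideanCLM, Matrix.mul_inv_rev,
    ← Matrix.mulVec_mulVec, Matrix.dotProduct_mulVec, ← Matrix.mulVec_transpose,
    Matrix.transpose_nonsing_inv, hL.eq]
  exact dotProduct_comm _ _

lemma inv_sqrt_two_pi_pow_mul_sq (n : ℕ) (d : ℝ) :
    (√((2 * π) ^ n * d ^ 2))⁻¹ = |d|⁻¹ * (2 * π) ^ (-(n / 2 : ℝ)) := by
  rw [sqrt_mul (by positivity), sqrt_sq_eq_abs, sqrt_eq_rpow, ← rpow_natCast,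
    ← rpow_mul (by positivity), rpow_neg (by positivity), mul_inv, mul_comm]
  ring_nf

lemma mvGaussian_eq_multivariateGaussian {n : ℕ} (μ : EuclideanSpace ℝ (Fin n))
    {S : Matrix (Fin n) (Fin n) ℝ} (hS : S.PosDef) :
    mvGaussian μ S = multivariateGaussian μ S := by
  set L := CFC.sqrt S
  have hLL : L * L = S := CFC.sqrt_mul_sqrt_self S hS.posSemidef.nonneg
  have hLsymm : L.IsSymm := (Matrix.nonneg_iff_posSemidef.mp (CFC.sqrt_nonneg S)).isHermitian
  have hdetS : S.det = L.det ^ 2 := by rw [← hLL, Matrix.det_mul, sq]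
  have hdet : L.det ≠ 0 := fun h => by
    have := hS.det_pos
    rw [hdetS, h] at this
    norm_num at this
  have hdetL : LinearMap.det (Matrix.toEuclideanLin L) = L.det := by
    rw [Matrix.toEuclideanLin_eq_toLin_orthonormal, LinearMap.det_toLin]
  let A := LinearMap.equivOfDetNeZero (Matrix.toEuclideanLin L) (hdetL ▸ hdet)
  have hdetA : LinearMap.det (A : EuclideanSpace ℝ (Fin n) →ₗ[ℝ] _) = L.det := hdetL
  have hAsymm (z : EuclideanSpace ℝ (Fin n)) : A.symm z = Matrix.toEuclideanLin L⁻¹ z := by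
    rw [LinearEquiv.symm_apply_eq]
    change z = Matrix.toEuclideanCLM (𝕜 := ℝ) L (Matrix.toEuclideanCLM (𝕜 := ℝ) L⁻¹ z)
    rw [← mul_apply_eq_comp, ← map_mul, Matrix.mul_nonsing_inv _ (isUnit_iff_ne_zero.mpr hdet),
      map_one, one_apply_eq_self]
  rw [multivariateGaussian, stdGaussian_eq_withDensity]
  change _ = Measure.map (fun x => μ + A x) _
  rw [map_add_linearEquiv_withDensity _ _ _ (by unfold stdGaussianPDFReal; fun_prop), mvGaussian]
  congr 1
  funext x
  rw [← ENNReal.ofReal_mul (by positivity)]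
  congr 1
  rw [hAsymm, stdGaussianPDFReal, norm_sq_toEuclideanLin_inv hLsymm, hLL,
    finrank_euclideanSpace_fin, hdetA, hdetS, inv_sqrt_two_pi_pow_mul_sq]
  ring

lemma map_inner_multivariateGaussian {ι : Type*} [Fintype ι] [DecidableEq ι]
    (μ : EuclideanSpace ℝ ι) {S : Matrix ι ι ℝ} (hS : S.PosSemidef) (w : EuclideanSpace ℝ ι) :
    (multivariateGaussian μ S).map (⟪w, ·⟫)
      = gaussianReal ⟪w, μ⟫ (⟪w, Matrix.toEuclideanLin S w⟫).toNNReal := by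
  have h := IsGaussian.map_eq_gaussianReal (μ := multivariateGaussian μ S) (innerSL ℝ w)
  rw [ContinuousLinearMap.integral_comp_id_comm IsGaussian.integrable_id,
    integral_id_multivariateGaussian] at h
  simp only [innerSL_apply_apply, coe_innerSL_apply] at h
  rw [h, ← covarianceBilin_self IsGaussian.memLp_two_id, covarianceBilin_multivariateGaussian hS,
    ← Matrix.inner_toEuclideanCLM]
  rfl

lemma mvGaussian_setOf_inner_lt {n : ℕ} (μ : EuclideanSpace ℝ (Fin n))
    {S : Matrix (Fin n) (Fin n) ℝ} (hS : S.PosDef) {w : EuclideanSpace ℝ (Fin n)} (hw : w ≠ 0)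
    (c : ℝ) :
    mvGaussian μ S {x | ⟪w, x⟫ < c}
      = ENNReal.ofReal ((1 - erf ((⟪w, μ⟫ - c) / √(2 * ⟪w, Matrix.toEuclideanLin S w⟫))) / 2) := by
  have hvar : 0 < ⟪w, Matrix.toEuclideanLin S w⟫ := by
    rw [← Matrix.coe_toEuclideanCLM_eq_toEuclideanLin]
    exact Matrix.inner_toEuclideanCLM S w w ▸ hS.dotProduct_mulVec_pos (by simpa using hw)
  rw [mvGaussian_eq_multivariateGaussian μ hS,
    show {x | ⟪w, x⟫ < c} = (⟪w, ·⟫) ⁻¹' Iio c from rfl,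
    ← Measure.map_apply (by fun_prop) measurableSet_Iio,
    map_inner_multivariateGaussian μ hS.posSemidef, gaussianReal_Iio_eq_erf _ (by simpa using hvar),
    Real.coe_toNNReal _ hvar.le, ← neg_sub, neg_div, erf_neg, ← sub_eq_add_neg]

lemma measure_inner_lt_le_of_erf_ge {n : ℕ} {Ω : Type*} [MeasurableSpace Ω] {P : Measure Ω}
    {X : Ω → EuclideanSpace ℝ (Fin n)} (hX : Measurable X) {xhat : EuclideanSpace ℝ (Fin n)}
    {S : Matrix (Fin n) (Fin n) ℝ} (hS : S.PosDef) (hlaw : P.map X = mvGaussian xhat S)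
    {w : EuclideanSpace ℝ (Fin n)} (hw : w ≠ 0) {c d : ℝ}
    (hcon : erf ((⟪w, xhat⟫ - c) / √(2 * ⟪w, Matrix.toEuclideanLin S w⟫)) ≥ 1 - 2 * d) :
    P {ω | ⟪w, X ω⟫ < c} ≤ ENNReal.ofReal d := by
  change P (X ⁻¹' {x | ⟪w, x⟫ < c}) ≤ _
  rw [← Measure.map_apply hX (measurableSet_lt (by fun_prop) measurable_const), hlaw,
    mvGaussian_setOf_inner_lt xhat hS hw]
  exact ENNReal.ofReal_le_ofReal (by linarith)

lemma ofReal_one_sub_sum_le_measure_biInter {Ω ι : Type*} [MeasurableSpace Ω] (P : Measure Ω)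
    [IsProbabilityMeasure P] {B : Finset ι} {A : ι → Set Ω} {e : ι → ℝ} (he : ∀ j ∈ B, 0 ≤ e j)
    (hA : ∀ j ∈ B, P (A j)ᶜ ≤ ENNReal.ofReal (e j)) :
    ENNReal.ofReal (1 - ∑ j ∈ B, e j) ≤ P (⋂ j ∈ B, A j) := by
  have hunion : P (⋂ j ∈ B, A j)ᶜ ≤ ∑ j ∈ B, P (A j)ᶜ := by
    rw [compl_iInter₂]
    exact measure_biUnion_finset_le B _
  calc ENNReal.ofReal (1 - ∑ j ∈ B, e j) = 1 - ∑ j ∈ B, ENNReal.ofReal (e j) := by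
        rw [ENNReal.ofReal_sub _ (Finset.sum_nonneg he), ENNReal.ofReal_one,
          ENNReal.ofReal_sum_of_nonneg he]
    _ ≤ 1 - P (⋂ j ∈ B, A j)ᶜ := by
        gcongr
        exact hunion.trans (Finset.sum_le_sum hA)
    _ ≤ P (⋂ j ∈ B, A j) := by
        rw [tsub_le_iff_right, ← measure_univ (μ := P)]
        exact measure_univ_le_add_compl _

/-- **Theorem 1**: for a Gaussian random vector `X` with mean `x̂` and positive-definite
covariance `Σ`, satisfaction of the deterministic disjunctive constraints
`erf ((N_{j,m}ᵀ x̂ - c_{j,m})/√(2 N_{j,m}ᵀ Σ N_{j,m})) ≥ 1 - 2 δ_{j,m}` for at least one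
`m ∈ {1,2}` per `j ∈ B`, together with the risk allocation `∑_{j,m} δ_{j,m} ≤ δ`, implies
the joint chance constraint `Pr(⋂_j ⋃_m {N_{j,m}ᵀ X ≥ c_{j,m}}) ≥ 1 - δ`. -/
theorem stmt5 {n : ℕ} {Ω ι : Type*} [MeasurableSpace Ω] (P : Measure Ω)
    [IsProbabilityMeasure P] (X : Ω → EuclideanSpace ℝ (Fin n)) (hX : Measurable X)
    (xhat : EuclideanSpace ℝ (Fin n)) (S : Matrix (Fin n) (Fin n) ℝ) (hS : S.PosDef)
    (hlaw : P.map X = mvGaussian xhat S)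
    (B : Finset ι) (N : ι → Fin 2 → EuclideanSpace ℝ (Fin n)) (hN : ∀ j m, N j m ≠ 0)
    (c : ι → Fin 2 → ℝ) (δ : ℝ) (d : ι → Fin 2 → ℝ)
    (hd : ∀ j m, d j m ∈ Set.Ioo (0:ℝ) (1/2))
    (hsum : ∑ j ∈ B, ∑ m : Fin 2, d j m ≤ δ)
    (h : ∀ j ∈ B, ∃ m : Fin 2,
      erf ((⟪N j m, xhat⟫ - c j m) /
          Real.sqrt (2 * ⟪N j m, Matrix.toEuclideanLin S (N j m)⟫)) ≥ 1 - 2 * d j m) :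
    P (⋂ j ∈ B, ⋃ m : Fin 2, {ω | ⟪N j m, X ω⟫ ≥ c j m}) ≥ ENNReal.ofReal (1 - δ) := by
  have hviolation (j : ι) (hj : j ∈ B) :
      P (⋃ m : Fin 2, {ω | ⟪N j m, X ω⟫ ≥ c j m})ᶜ ≤ ENNReal.ofReal (∑ m : Fin 2, d j m) := by
    obtain ⟨m, hm⟩ := h j hj
    calc P (⋃ m : Fin 2, {ω | ⟪N j m, X ω⟫ ≥ c j m})ᶜ ≤ P {ω | ⟪N j m, X ω⟫ < c j m} :=
          measure_mono fun ω hω =>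
            show ⟪N j m, X ω⟫ < c j m from not_le.mp fun hge => hω (mem_iUnion.mpr ⟨m, hge⟩)
      _ ≤ ENNReal.ofReal (d j m) := measure_inner_lt_le_of_erf_ge hX hS hlaw (hN j m) hm
      _ ≤ ENNReal.ofReal (∑ m : Fin 2, d j m) := ENNReal.ofReal_le_ofReal
          (Finset.single_le_sum (fun m _ => (hd j m).1.le) (Finset.mem_univ m))
  calc ENNReal.ofReal (1 - δ) ≤ ENNReal.ofReal (1 - ∑ j ∈ B, ∑ m : Fin 2, d j m) := by gcongr
    _ ≤ _ := ofReal_one_sub_sum_le_measure_biInter P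
          (fun j _ => Finset.sum_nonneg fun m _ => (hd j m).1.le) hviolation
end

section
/- Let V be a real inner product space, let p, v ∈ V with v ≠ 0, and let r be a real number with 0 < r < ‖p‖. Then there exists λ ≥ 0 with ‖λ • v − p‖ ≤ r if and only if ⟪v, p⟫ ≥ ‖v‖ · √(‖p‖² − r²). -/
open scoped RealInnerProductSpace

/-- Analytic characterization of the collision cone of the velocity obstacle method:
in a real inner product space, for `v ≠ 0` and `0 < r < ‖p‖`, the ray from the origin
in direction `v` meets the closed ball of radius `r` centered at `p` iff
`⟪v, p⟫ ≥ ‖v‖ √(‖p‖² - r²)`. -/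
theorem stmt8 {V : Type*} [NormedAddCommGroup V] [InnerProductSpace ℝ V]
    (p v : V) (hv : v ≠ 0) (r : ℝ) (hr : 0 < r) (hrp : r < ‖p‖) :
    (∃ l : ℝ, 0 ≤ l ∧ ‖l • v - p‖ ≤ r) ↔
      ⟪v, p⟫ ≥ ‖v‖ * Real.sqrt (‖p‖ ^ 2 - r ^ 2) := by
  have hvpos : 0 < ‖v‖ := norm_pos_iff.mpr hv
  set s : ℝ := Real.sqrt (‖p‖ ^ 2 - r ^ 2) with hs
  have hsub : 0 < ‖p‖ ^ 2 - r ^ 2 := by nlinarith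
  have hs0 : 0 < s := Real.sqrt_pos.mpr hsub
  have hs2 : s ^ 2 = ‖p‖ ^ 2 - r ^ 2 := Real.sq_sqrt hsub.le
  have key : ∀ l : ℝ, 0 ≤ l →
      ‖l • v - p‖ ^ 2 = l ^ 2 * ‖v‖ ^ 2 - 2 * l * ⟪v, p⟫ + ‖p‖ ^ 2 := by
    intro l hl
    rw [@norm_sub_sq_real, norm_smul, real_inner_smul_left, Real.norm_eq_abs,
      abs_of_nonneg hl]
    ring
  constructor
  · rintro ⟨l, hl, hle⟩
    have hsq : ‖l • v - p‖ ^ 2 ≤ r ^ 2 := by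
      have := norm_nonneg (l • v - p)
      nlinarith
    rw [key l hl] at hsq
    -- 2 l ⟪v,p⟫ ≥ l²‖v‖² + s² ≥ 2 l ‖v‖ s > 0
    have hlpos : 0 < l := by
      rcases hl.lt_or_eq with h | h
      · exact h
      · exfalso; rw [← h] at hsq; nlinarith
    have hag : (l * ‖v‖ - s) ^ 2 ≥ 0 := sq_nonneg _
    nlinarith
  · intro hip
    have hvp : 0 ≤ ⟪v, p⟫ := le_trans (by positivity) hip
    have hv2 : (0:ℝ) < ‖v‖ ^ 2 := by positivity
    refine ⟨⟪v, p⟫ / ‖v‖ ^ 2, div_nonneg hvp hv2.le, ?_⟩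
    · have hsq2 : ⟪v, p⟫ ^ 2 ≥ ‖v‖ ^ 2 * s ^ 2 := by
        have := mul_self_le_mul_self (by positivity : (0:ℝ) ≤ ‖v‖ * s) hip
        nlinarith
      have h2 : ‖(⟪v, p⟫ / ‖v‖ ^ 2) • v - p‖ ^ 2 ≤ r ^ 2 := by
        rw [key _ (div_nonneg hvp hv2.le)]
        have heq : (⟪v, p⟫ / ‖v‖ ^ 2) ^ 2 * ‖v‖ ^ 2 - 2 * (⟪v, p⟫ / ‖v‖ ^ 2) * ⟪v, p⟫
            + ‖p‖ ^ 2 = ‖p‖ ^ 2 - ⟪v, p⟫ ^ 2 / ‖v‖ ^ 2 := by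
          field_simp; ring
        rw [heq]
        have hd : ‖p‖ ^ 2 - r ^ 2 ≤ ⟪v, p⟫ ^ 2 / ‖v‖ ^ 2 :=
          (le_div_iff₀ hv2).mpr (by nlinarith)
        linarith
      have h3 := Real.sqrt_le_sqrt h2
      rwa [Real.sqrt_sq (norm_nonneg _), Real.sqrt_sq hr.le] at h3
end

section
/- Identify the plane with ℂ. Let p ∈ ℂ and r ∈ ℝ with 0 < r < |p|, set α = arcsin(r / |p|), and define the normal vectors N₁ = e^{i(α − π/2)} · p and N₂ = e^{i(π/2 − α)} · p (i.e., the rotations of R(α)p by −π/2 and of R(−α)p by +π/2, respectively). Then for every v ∈ ℂ with v ≠ 0: there exists λ ≥ 0 with |λ v − p| ≤ r if and only if Re(conj(N₁) · v) ≥ 0 and Re(conj(N₂) · v) ≥ 0. -/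
open Complex ComplexConjugate

/-!
Write `x + i y = conj p · v`, so that `x` is the inner product of `p` and `v` and `|y| / |v|` is
the distance from `p` to the line `ℝ v`. By the Lagrange identity
`|l v - p|² |v|² = (l |v|² - x)² + y²`, the ray `{l v | l ≥ 0}` meets the disk of radius `r < |p|`
about `p` iff `x ≥ 0` and `y² ≤ r² |v|²`. The two half-plane conditions read
`sin α · x ∓ cos α · y ≥ 0`, i.e. `|cos α · y| ≤ sin α · x`, and squaring with `sin α = r / |p|`
gives the same pair.
-/

theorem Complex.re_conj_exp_mul_I_mul_mul (θ : ℝ) (p v : ℂ) :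
    (conj (exp (θ * I) * p) * v).re =
      Real.cos θ * (conj p * v).re + Real.sin θ * (conj p * v).im := by
  rw [exp_mul_I, ← ofReal_cos, ← ofReal_sin]
  simp only [map_mul, map_add, conj_ofReal, conj_I, mul_re, mul_im, add_re, add_im, ofReal_re,
    ofReal_im, neg_re, neg_im, I_re, I_im, conj_re, conj_im]
  ring

theorem Complex.conj_mul_re_sq_add_im_sq (p v : ℂ) :
    (conj p * v).re ^ 2 + (conj p * v).im ^ 2 = normSq p * normSq v := by
  rw [sq, sq, ← normSq_apply, normSq_mul, normSq_conj]

theorem Complex.normSq_ofReal_mul_sub_mul_normSq (l : ℝ) (p v : ℂ) :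
    normSq (l * v - p) * normSq v =
      (l * normSq v - (conj p * v).re) ^ 2 + (conj p * v).im ^ 2 := by
  simp only [normSq_apply, sub_re, sub_im, mul_re, mul_im, ofReal_re, ofReal_im, conj_re, conj_im]
  ring

theorem Complex.exists_nonneg_norm_ofReal_mul_sub_le_iff {p v : ℂ} {r : ℝ} (hr : 0 ≤ r)
    (hrp : r < ‖p‖) (hv : v ≠ 0) :
    (∃ l : ℝ, 0 ≤ l ∧ ‖(l : ℂ) * v - p‖ ≤ r) ↔
      0 ≤ (conj p * v).re ∧ (conj p * v).im ^ 2 ≤ r ^ 2 * normSq v := by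
  have hV : 0 < normSq v := normSq_pos.mpr hv
  have hlag := normSq_ofReal_mul_sub_mul_normSq (p := p) (v := v)
  constructor
  · rintro ⟨l, hl, hdist⟩
    have hsq : normSq (l * v - p) ≤ r ^ 2 := by
      rw [← Complex.sq_norm]
      exact pow_le_pow_left₀ (norm_nonneg _) hdist 2
    have hbound : (l * normSq v - (conj p * v).re) ^ 2 + (conj p * v).im ^ 2 ≤ r ^ 2 * normSq v :=
      hlag l ▸ mul_le_mul_of_nonneg_right hsq hV.le
    have hr2 : r ^ 2 * normSq v < normSq p * normSq v := by
      rw [← Complex.sq_norm p]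
      exact mul_lt_mul_of_pos_right (pow_lt_pow_left₀ hrp hr two_ne_zero) hV
    rw [← conj_mul_re_sq_add_im_sq] at hr2
    refine ⟨?_, by nlinarith [sq_nonneg (l * normSq v - (conj p * v).re)]⟩
    nlinarith [mul_nonneg hl hV.le]
  · rintro ⟨hx, hy⟩
    refine ⟨(conj p * v).re / normSq v, div_nonneg hx hV.le, ?_⟩
    have hsq : normSq (((conj p * v).re / normSq v : ℝ) * v - p) ≤ r ^ 2 := by
      refine le_of_mul_le_mul_right ?_ hV
      rw [hlag, div_mul_cancel₀ _ hV.ne', sub_self, sq, zero_mul, zero_add]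
      exact hy
    rwa [← sq_le_sq₀ (norm_nonneg _) hr, Complex.sq_norm]

theorem Real.nonneg_sub_and_nonneg_add_iff_sq_le {s c x y : ℝ} (hs : 0 < s)
    (hsc : s ^ 2 + c ^ 2 = 1) :
    (0 ≤ s * x - c * y ∧ 0 ≤ s * x + c * y) ↔ 0 ≤ x ∧ y ^ 2 ≤ s ^ 2 * (x ^ 2 + y ^ 2) := by
  have hsq : y ^ 2 ≤ s ^ 2 * (x ^ 2 + y ^ 2) ↔ (c * y) ^ 2 ≤ (s * x) ^ 2 := by
    constructor <;> intro h <;> nlinarith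
  rw [hsq]
  constructor
  · rintro ⟨h₁, h₂⟩
    refine ⟨nonneg_of_mul_nonneg_right (by linarith : 0 ≤ s * x) hs, ?_⟩
    nlinarith [mul_nonneg h₁ h₂]
  · rintro ⟨hx, hcy⟩
    have := abs_le.mp (abs_le_of_sq_le_sq hcy (mul_nonneg hs.le hx))
    constructor <;> linarith

/-- The collision cone as the intersection of two half-planes: in the plane `ℂ`, with
`0 < r < |p|`, `α = arcsin (r/|p|)`, and normal vectors `N₁ = e^{i(α - π/2)} p`,
`N₂ = e^{i(π/2 - α)} p`, a nonzero velocity `v` generates a ray from the origin that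
meets the closed disk of radius `r` about `p` iff `Re(conj N₁ · v) ≥ 0` and
`Re(conj N₂ · v) ≥ 0`. -/
theorem stmt9 (p : ℂ) (r : ℝ) (hr : 0 < r) (hrp : r < ‖p‖)
    (α : ℝ) (hα : α = Real.arcsin (r / ‖p‖))
    (N₁ N₂ : ℂ)
    (hN₁ : N₁ = Complex.exp ((α - Real.pi / 2 : ℝ) * Complex.I) * p)
    (hN₂ : N₂ = Complex.exp ((Real.pi / 2 - α : ℝ) * Complex.I) * p)
    (v : ℂ) (hv : v ≠ 0) :
    (∃ l : ℝ, 0 ≤ l ∧ ‖(l : ℂ) * v - p‖ ≤ r) ↔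
      0 ≤ ((starRingEnd ℂ) N₁ * v).re ∧ 0 ≤ ((starRingEnd ℂ) N₂ * v).re := by
  have hp : 0 < ‖p‖ := hr.trans hrp
  have hsin : Real.sin α = r / ‖p‖ := by
    rw [hα, Real.sin_arcsin (by linarith [div_pos hr hp]) ((div_lt_one hp).mpr hrp).le]
  have hscale : (r / ‖p‖) ^ 2 * (normSq p * normSq v) = r ^ 2 * normSq v := by
    rw [← Complex.sq_norm p]
    field_simp
  rw [hN₁, hN₂, re_conj_exp_mul_I_mul_mul, re_conj_exp_mul_I_mul_mul, Real.cos_sub_pi_div_two,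
    Real.sin_sub_pi_div_two, Real.cos_pi_div_two_sub, Real.sin_pi_div_two_sub, neg_mul,
    ← sub_eq_add_neg,
    Real.nonneg_sub_and_nonneg_add_iff_sq_le (hsin ▸ div_pos hr hp) (Real.sin_sq_add_cos_sq α),
    conj_mul_re_sq_add_im_sq, hsin, hscale]
  exact exists_nonneg_norm_ofReal_mul_sub_le_iff hr.le hrp hv
end

section
/- Let a, b ∈ ℝ, w > 0, p > 0, u : ℕ → ℝ, and let (Ω, 𝓕, P) be a probability space carrying a random variable x₀ with law gaussianReal m p and an independent sequence (ω_k) of mutually independent random variables with ω_k having law gaussianReal 0 w, all independent of x₀. Define x_{k+1} = a · x_k + b · u(k) + ω_k. Then for every k, the law of x_k is gaussianReal (a^k m + ∑_{l=0}^{k−1} a^{k−l−1} b u(l)) (a^{2k} p + ∑_{l=0}^{k−1} a^{2l} w). -/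
/-!
The state `x k` is a measurable function of `x₀, ω₀, …, ω_{k-1}`, hence independent of `ω k`.
So `x (k + 1)` is an affine image of a Gaussian plus an independent centred Gaussian: it is
Gaussian, with mean `a · mean k + b u k` and variance `a² · var k + w`. The closed forms in the
statement solve these two linear recurrences.
-/

open MeasureTheory ProbabilityTheory Finset
open scoped NNReal

lemma ProbabilityTheory.iIndepFun.indepFun_of_measurable_iSup {Ω ι β γ : Type*}
    [MeasurableSpace Ω] {P : Measure Ω} [mβ : MeasurableSpace β] [MeasurableSpace γ]
    {Y : ι → Ω → β} (hY : iIndepFun Y P) (hYm : ∀ i, Measurable (Y i)) {S : Set ι} {j : ι}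
    (hj : j ∉ S) {X : Ω → γ} (hX : Measurable[⨆ i ∈ S, mβ.comap (Y i)] X) :
    IndepFun X (Y j) P := by
  have hST : Disjoint S {j} := Set.disjoint_singleton_right.mpr hj
  have h := indep_iSup_of_disjoint (fun i => (hYm i).comap_le) hY.iIndep hST
  rw [IndepFun_iff_Indep]
  refine indep_of_indep_of_le_right (indep_of_indep_of_le_left h hX.comap_le) ?_
  exact le_iSup₂ (f := fun i (_ : i ∈ ({j} : Set ι)) => mβ.comap (Y i)) j rfl

lemma measurable_iSup_comap_of_affine_recursion {Ω : Type*} {Y : ℕ → Ω → ℝ}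
    (a : ℝ) (c : ℕ → ℝ) {x : ℕ → Ω → ℝ} (hx0 : x 0 = Y 0)
    (hxrec : ∀ k, x (k + 1) = fun s => a * x k s + c k + Y (k + 1) s) (k : ℕ) :
    Measurable[⨆ i ∈ Set.Iic k, MeasurableSpace.comap (Y i) inferInstance] (x k) := by
  induction k with
  | zero =>
    rw [hx0]
    exact Measurable.of_comap_le (le_iSup₂_of_le 0 (Set.mem_Iic.mpr le_rfl) le_rfl)
  | succ k ih =>
    set 𝓕 := ⨆ i ∈ Set.Iic (k + 1), MeasurableSpace.comap (Y i) inferInstance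
    have hmono : ⨆ i ∈ Set.Iic k, MeasurableSpace.comap (Y i) inferInstance ≤ 𝓕 :=
      biSup_mono fun i hi => (Set.mem_Iic.mp hi).trans k.le_succ
    have hx : Measurable[𝓕] (x k) := ih.mono hmono le_rfl
    have hY : Measurable[𝓕] (Y (k + 1)) :=
      Measurable.of_comap_le (le_iSup₂_of_le (k + 1) (Set.mem_Iic.mpr le_rfl) le_rfl)
    rw [hxrec k]
    exact ((hx.const_mul a).add_const (c k)).add hY

lemma gaussianReal_map_const_mul_add_const (μ c d : ℝ) (v : ℝ≥0) :
    (gaussianReal μ v).map (fun y => c * y + d)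
      = gaussianReal (c * μ + d) (.mk (c ^ 2) (sq_nonneg c) * v) := by
  rw [← gaussianReal_map_add_const, ← gaussianReal_map_const_mul,
    Measure.map_map (measurable_add_const d) (measurable_const_mul c)]
  rfl

lemma map_const_mul_add_add_eq_gaussianReal {Ω : Type*} [MeasurableSpace Ω] {P : Measure Ω}
    {X N : Ω → ℝ} (hXN : IndepFun X N P) (hXm : Measurable X) {μ : ℝ} {v w : ℝ≥0}
    (hX : P.map X = gaussianReal μ v) (hN : P.map N = gaussianReal 0 w) (c d : ℝ) :
    P.map (fun s => c * X s + d + N s)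
      = gaussianReal (c * μ + d) (.mk (c ^ 2) (sq_nonneg c) * v + w) := by
  have hf : Measurable fun y : ℝ => c * y + d := (measurable_const_mul c).add_const d
  have hfX : P.map (fun s => c * X s + d)
      = gaussianReal (c * μ + d) (.mk (c ^ 2) (sq_nonneg c) * v) := by
    rw [← gaussianReal_map_const_mul_add_const, ← hX, Measure.map_map hf hXm]
    rfl
  rw [← add_zero (c * μ + d)]
  exact gaussianReal_add_gaussianReal_of_indepFun (hXN.comp hf measurable_id) hfX hN

lemma linearRecurrence_mean_succ (a b m : ℝ) (u : ℕ → ℝ) (k : ℕ) :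
    a * (a ^ k * m + ∑ l ∈ range k, a ^ (k - l - 1) * b * u l) + b * u k
      = a ^ (k + 1) * m + ∑ l ∈ range (k + 1), a ^ (k + 1 - l - 1) * b * u l := by
  have hterm : ∀ l ∈ range k,
      a * (a ^ (k - l - 1) * b * u l) = a ^ (k + 1 - l - 1) * b * u l := by
    intro l hl
    rw [show k + 1 - l - 1 = k - l - 1 + 1 by have := mem_range.mp hl; omega, pow_succ]
    ring
  rw [sum_range_succ, mul_add, mul_sum, sum_congr rfl hterm, show k + 1 - k - 1 = 0 by omega,
    pow_succ]
  ring

lemma linearRecurrence_variance_succ (a p w : ℝ) (k : ℕ) :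
    a ^ 2 * (a ^ (2 * k) * p + ∑ l ∈ range k, a ^ (2 * l) * w) + w
      = a ^ (2 * (k + 1)) * p + ∑ l ∈ range (k + 1), a ^ (2 * l) * w := by
  rw [sum_range_succ', mul_add, mul_sum]
  simp only [mul_add, pow_add, mul_one]
  ring_nf

/-- The scalar instance of the propagation equations (21a)-(21b): for the linear
stochastic system `x(k+1) = a x(k) + b u(k) + ω(k)` with `x(0) ∼ N(m, p)` and the
`ω(k) ∼ N(0, w)` mutually independent and independent of `x(0)`, the law of `x(k)` is
Gaussian with mean `a^k m + ∑_{l<k} a^{k-l-1} b u(l)` and variance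
`a^{2k} p + ∑_{l<k} a^{2l} w`. -/
theorem stmt14 {Ω : Type*} [MeasurableSpace Ω] (P : Measure Ω) [IsProbabilityMeasure P]
    (a b m w p : ℝ) (hw : 0 < w) (hp : 0 < p) (u : ℕ → ℝ)
    (x0 : Ω → ℝ) (hx0meas : Measurable x0)
    (ω : ℕ → Ω → ℝ) (hωmeas : ∀ k, Measurable (ω k))
    (hx0law : P.map x0 = gaussianReal m ⟨p, hp.le⟩)
    (hωlaw : ∀ k, P.map (ω k) = gaussianReal 0 ⟨w, hw.le⟩)
    (hindep : iIndepFun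
      (fun i : ℕ => Nat.casesOn i x0 ω : ℕ → Ω → ℝ) P)
    (x : ℕ → Ω → ℝ) (hx0 : x 0 = x0)
    (hxrec : ∀ k, x (k + 1) = fun s => a * x k s + b * u k + ω k s) :
    ∀ k : ℕ, P.map (x k) = gaussianReal
      (a ^ k * m + ∑ l ∈ Finset.range k, a ^ (k - l - 1) * b * u l)
      ⟨a ^ (2 * k) * p + ∑ l ∈ Finset.range k, a ^ (2 * l) * w, by
        refine add_nonneg (mul_nonneg ?_ hp.le)
          (Finset.sum_nonneg fun l _ => mul_nonneg ?_ hw.le) <;>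
        · rw [pow_mul]; positivity⟩ := by
  set Y : ℕ → Ω → ℝ := fun i => Nat.casesOn i x0 ω
  have hYm : ∀ i, Measurable (Y i) := by
    rintro (_ | k)
    exacts [hx0meas, hωmeas k]
  have hxY : ∀ k,
      Measurable[⨆ i ∈ Set.Iic k, MeasurableSpace.comap (Y i) inferInstance] (x k) :=
    measurable_iSup_comap_of_affine_recursion a (fun k => b * u k) hx0 hxrec
  have hxm : ∀ k, Measurable (x k) := fun k =>
    (hxY k).mono (iSup₂_le fun i _ => (hYm i).comap_le) le_rfl
  have hxω : ∀ k, IndepFun (x k) (ω k) P := fun k =>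
    hindep.indepFun_of_measurable_iSup hYm (j := k + 1) (by simp) (hxY k)
  intro k
  induction k with
  | zero =>
    rw [hx0, hx0law]
    congr 1
    · simp
    · exact NNReal.eq (by simp)
  | succ k ih =>
    rw [hxrec k, map_const_mul_add_add_eq_gaussianReal (hxω k) (hxm k) ih (hωlaw k)]
    congr 1
    · exact linearRecurrence_mean_succ a b m u k
    · exact NNReal.eq (linearRecurrence_variance_succ a p w k)
end
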